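/- Let H be finite dimensional with dim H = n and let φ be a positive linear map on B(H). Then φ is ergodic if and only if (1 + φ)^{n−1}(A) is positive definite for every positive semidefinite A ≠ 0. -/

import Mathlib

open scoped ENNReal NNReal ComplexOrder ComplexInnerProductSpace
open ContinuousLinearMap Filter Topology

noncomputable section

variable {H : Type*} [NormedAddCommGroup H] [InnerProductSpace ℂ H]

/-- A bounded operator is positive semidefinite if `⟪x, A x⟫ ≥ 0` for all `x`. -/
def IsPosSemidef (A : H →L[ℂ] H) : Prop := ∀ x : H, 0 ≤ ⟪x, A x⟫

/-- A bounded operator is positive definite if `⟪x, A x⟫ > 0` for all `x ≠ 0`. -/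
def IsPosDef (A : H →L[ℂ] H) : Prop := ∀ x : H, x ≠ 0 → 0 < ⟪x, A x⟫

variable [CompleteSpace H]

/-- The absolute value `|A| = (A⋆A)^{1/2}` of a bounded operator. -/
def opAbs (A : H →L[ℂ] H) : H →L[ℂ] H := CFC.sqrt (adjoint A * A)

/-- The trace of a positive operator, as the supremum over finite orthonormal
families of `∑ ⟪e, A e⟫`.  For positive semidefinite `A` this is `tr A`. -/
def posTrace (A : H →L[ℂ] H) : ℝ≥0∞ :=
  ⨆ (s : Finset H) (_ : Orthonormal ℂ (fun x : s => (x : H))),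
    ∑ x ∈ s, ENNReal.ofReal (⟪x, A x⟫).re

/-- The Schatten `p`-norm `(tr |A|^p)^{1/p}` (for `p = ∞`, the operator norm),
with values in `ℝ≥0∞`. -/
def schattenNorm (p : ℝ≥0∞) (A : H →L[ℂ] H) : ℝ≥0∞ :=
  if p = ∞ then ENNReal.ofReal ‖A‖
  else (posTrace (cfc (fun x : ℝ => x ^ p.toReal) (opAbs A))) ^ (1 / p.toReal)

/-- Membership in the Schatten class `J_p`. -/
def MemJp (p : ℝ≥0∞) (A : H →L[ℂ] H) : Prop := schattenNorm p A < ∞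

/-- `φ` is (the extension to `B(H)` of) a linear map on the Schatten class `J_p`. -/
structure IsLinJp (p : ℝ≥0∞) (φ : (H →L[ℂ] H) → (H →L[ℂ] H)) : Prop where
  map_mem : ∀ A, MemJp p A → MemJp p (φ A)
  map_add : ∀ A B, MemJp p A → MemJp p B → φ (A + B) = φ A + φ B
  map_smul : ∀ (c : ℂ) (A), MemJp p A → φ (c • A) = c • φ A

/-- A positive map on `J_p`: it maps the cone `C_p` into itself. -/
def IsPosMapJp (p : ℝ≥0∞) (φ : (H →L[ℂ] H) → (H →L[ℂ] H)) : Prop :=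
  ∀ A, MemJp p A → IsPosSemidef A → IsPosSemidef (φ A)

/-- `exp (t φ) A = ∑ tⁿ φⁿ(A) / n!`. -/
def expApply (φ : (H →L[ℂ] H) → (H →L[ℂ] H)) (t : ℝ) (A : H →L[ℂ] H) : H →L[ℂ] H :=
  ∑' n : ℕ, ((t ^ n / n.factorial : ℝ)) • φ^[n] A

/-- A positive map `φ` on `J_p` is ergodic if for every nonzero `A ≥ 0` in `J_p`
there is `t > 0` with `(exp t φ)(A) > 0`. -/
def ErgodicJp (p : ℝ≥0∞) (φ : (H →L[ℂ] H) → (H →L[ℂ] H)) : Prop :=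
  ∀ A, MemJp p A → IsPosSemidef A → A ≠ 0 → ∃ t : ℝ, 0 < t ∧ IsPosDef (expApply φ t A)

/-- A positive map `φ` on `J_p` is positivity improving if `φ A > 0` for every
nonzero `A ≥ 0` in `J_p`. -/
def PosImprovingJp (p : ℝ≥0∞) (φ : (H →L[ℂ] H) → (H →L[ℂ] H)) : Prop :=
  ∀ A, MemJp p A → IsPosSemidef A → A ≠ 0 → IsPosDef (φ A)

/-- The operator norm `‖φ‖_p = sup_{‖A‖_p ≤ 1} ‖φ(A)‖_p` of a map on `J_p`. -/
def opNormJp (p : ℝ≥0∞) (φ : (H →L[ℂ] H) → (H →L[ℂ] H)) : ℝ≥0∞ :=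
  ⨆ (A : H →L[ℂ] H) (_ : schattenNorm p A ≤ 1), schattenNorm p (φ A)

/-- Compactness (in sequential form) of a map on `J_p` : every `J_p`-bounded
sequence has a subsequence whose image converges in `J_p`-norm. -/
def CompactMapJp (p : ℝ≥0∞) (φ : (H →L[ℂ] H) → (H →L[ℂ] H)) : Prop :=
  ∀ (C : ℝ≥0) (A : ℕ → H →L[ℂ] H), (∀ n, schattenNorm p (A n) ≤ C) →
    ∃ g : ℕ → ℕ, StrictMono g ∧ ∃ B, MemJp p B ∧
      Tendsto (fun k => schattenNorm p (φ (A (g k)) - B)) atTop (𝓝 0)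

/-- The block operator on `ℓ²(Fin n; H)` associated with an `n × n` matrix of
bounded operators on `H`. -/
def matBlock {n : ℕ} (M : Fin n → Fin n → (H →L[ℂ] H)) :
    PiLp 2 (fun _ : Fin n => H) →L[ℂ] PiLp 2 (fun _ : Fin n => H) :=
  (PiLp.continuousLinearEquiv 2 ℂ (fun _ : Fin n => H)).symm.toContinuousLinearMap ∘L
    (ContinuousLinearMap.pi fun i => ∑ j, (M i j) ∘L (ContinuousLinearMap.proj j)) ∘L
    (PiLp.continuousLinearEquiv 2 ℂ (fun _ : Fin n => H)).toContinuousLinearMap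

/-- `n`-positivity of a map on `J_p` : the induced map `φ ⊗ 1ₙ` on `n × n` operator
matrices over `J_p` preserves positive semidefiniteness. -/
def NPositiveJp (p : ℝ≥0∞) (n : ℕ) (φ : (H →L[ℂ] H) → (H →L[ℂ] H)) : Prop :=
  ∀ M : Fin n → Fin n → (H →L[ℂ] H), (∀ i j, MemJp p (M i j)) →
    IsPosSemidef (matBlock M) → IsPosSemidef (matBlock fun i j => φ (M i j))

/-- Complete positivity: `n`-positivity for every `n`. -/
def CompletelyPositiveJp (p : ℝ≥0∞) (φ : (H →L[ℂ] H) → (H →L[ℂ] H)) : Prop :=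
  ∀ n : ℕ, NPositiveJp p n φ

/-- The real part `(A + A⋆)/2` of an operator. -/
def opRe (A : H →L[ℂ] H) : H →L[ℂ] H := (2 : ℂ)⁻¹ • (A + adjoint A)

/-- The imaginary part `(A - A⋆)/(2i)` of an operator. -/
def opIm (A : H →L[ℂ] H) : H →L[ℂ] H := (2 * Complex.I)⁻¹ • (A - adjoint A)

/-- The positive part of a self-adjoint operator, via the continuous functional calculus. -/
def opPosPart (A : H →L[ℂ] H) : H →L[ℂ] H := cfc (fun x : ℝ => max x 0) A

/-- The negative part of a self-adjoint operator, via the continuous functional calculus. -/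
def opNegPart (A : H →L[ℂ] H) : H →L[ℂ] H := cfc (fun x : ℝ => max (-x) 0) A

/-- The trace of a trace-class operator `A`, computed from the decomposition of `A`
into the positive and negative parts of its real and imaginary parts. -/
def opTrace (A : H →L[ℂ] H) : ℂ :=
  (((posTrace (opPosPart (opRe A))).toReal - (posTrace (opNegPart (opRe A))).toReal : ℝ) : ℂ) +
    Complex.I * (((posTrace (opPosPart (opIm A))).toReal
      - (posTrace (opNegPart (opIm A))).toReal : ℝ) : ℂ)

/-- A map on `J_1` is trace preserving if `tr (φ A) = tr A` for all `A ∈ J_1`. -/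
def TracePreserving (φ : (H →L[ℂ] H) → (H →L[ℂ] H)) : Prop :=
  ∀ A, MemJp 1 A → opTrace (φ A) = opTrace A

/-- The Hilbert–Schmidt inner product `⟨A, B⟩₂ = tr (A⋆ B)`. -/
def hsInner (A B : H →L[ℂ] H) : ℂ := opTrace (adjoint A * B)

/-- `λ` belongs to the resolvent set of the map `φ` on `J_p`: `λ - φ` has a bounded
linear inverse on `J_p`. -/
def ResolventAt (p : ℝ≥0∞) (φ : (H →L[ℂ] H) → (H →L[ℂ] H)) (lam : ℂ) : Prop :=
  ∃ ψ : (H →L[ℂ] H) → (H →L[ℂ] H), IsLinJp p ψ ∧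
    (∃ C : ℝ≥0, ∀ A, MemJp p A → schattenNorm p (ψ A) ≤ C * schattenNorm p A) ∧
    (∀ A, MemJp p A → ψ (lam • A - φ A) = A) ∧
    (∀ A, MemJp p A → lam • ψ A - φ (ψ A) = A)

/-- `U` is the partial isometry in the polar decomposition `A = U |A|`:
it is isometric on the closure of the range of `|A|` and vanishes on `ker A`. -/
def IsPolarDecomp (A U : H →L[ℂ] H) : Prop :=
  A = U * opAbs A ∧ (∀ x ∈ closure (Set.range (opAbs A)), ‖U x‖ = ‖x‖) ∧
    ∀ x, A x = 0 → U x = 0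

/-!
For `A ≥ 0` write `T m = (1 + φ)^m A = ∑ k ≤ m, (m choose k) φ^k A` and
`exp (tφ) A = ∑ k, t^k / k! • φ^k A`. Both are sums of positive operators with positive
coefficients, so their kernels are `⋂ k ≤ m, ker φ^k A` and `⋂ k, ker φ^k A`, and both sides of
the equivalence become statements about kernels.

The chain `ker T m` decreases, since `T (m + 1) = T m + φ (T m)` gives
`ker T (m + 1) = ker T m ⊓ ker φ (T m)`. In finite dimension `ker φ (T)` depends only on `ker T`,
because `S ≤ c T` as soon as `ker T ≤ ker S`. Hence once the chain stalls it is constant, so it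
decreases strictly until it stabilises; as `ker A ≠ ⊤` this happens by step `n - 1`, and
`ker T (n - 1) = ker (exp (tφ) A)` for every `t > 0`.
-/

theorem LinearMap.exists_norm_le_mul_norm_of_ker_le {𝕜 M F G : Type*} [NontriviallyNormedField 𝕜]
    [CompleteSpace 𝕜] [AddCommGroup M] [Module 𝕜 M] [NormedAddCommGroup F] [NormedSpace 𝕜 F]
    [FiniteDimensional 𝕜 F] [NormedAddCommGroup G] [NormedSpace 𝕜 G] (f : M →ₗ[𝕜] F)
    (g : M →ₗ[𝕜] G) (h : LinearMap.ker f ≤ LinearMap.ker g) :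
    ∃ C, ∀ x, ‖g x‖ ≤ C * ‖f x‖ := by
  -- `g` factors through `range f`, which is finite-dimensional, so the factor is bounded
  let q := LinearMap.toContinuousLinearMap
    ((LinearMap.ker f).liftQ g h ∘ₗ f.quotKerEquivRange.symm.toLinearMap)
  refine ⟨‖q‖, fun x => ?_⟩
  have hq : q ⟨f x, LinearMap.mem_range_self f x⟩ = g x := by
    simp [q, LinearMap.quotKerEquivRange_symm_apply_image]
  simpa [hq] using q.le_opNorm ⟨f x, LinearMap.mem_range_self f x⟩

theorem Submodule.eq_iInf_of_antitone_of_finrank_le {K V : Type*} [DivisionRing K] [AddCommGroup V]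
    [Module K V] [FiniteDimensional K V] {f : ℕ → Submodule K V} (hf : Antitone f)
    (hstab : ∀ m, f (m + 1) = f m → f (m + 2) = f (m + 1)) {m : ℕ}
    (hm : Module.finrank K (f 0) ≤ m) : f m = ⨅ i, f i := by
  have hconst (i : ℕ) (hi : f (i + 1) = f i) (j : ℕ) : f (i + j) = f i := by
    have hsucc (j : ℕ) : f (i + j + 1) = f (i + j) := by
      induction j with
      | zero => exact hi
      | succ j ih => exact hstab _ ih
    induction j with
    | zero => rfl
    | succ j ih => rw [← add_assoc, hsucc, ih]
  -- a strict descent can last at most `finrank K (f 0)` steps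
  obtain ⟨i, hi, hfi⟩ : ∃ i ≤ Module.finrank K (f 0), f (i + 1) = f i := by
    by_contra! hne
    have hdrop (j : ℕ) (hj : j ≤ Module.finrank K (f 0) + 1) :
        Module.finrank K (f j) + j ≤ Module.finrank K (f 0) := by
      induction j with
      | zero => simp
      | succ j ih =>
        have := Submodule.finrank_lt_finrank_of_lt
          ((hf (Nat.le_add_right j 1)).lt_of_ne (hne j (by omega)))
        have := ih (by omega)
        omega
    have := hdrop _ le_rfl
    omega
  obtain ⟨k, rfl⟩ := Nat.exists_eq_add_of_le (hi.trans hm)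
  refine le_antisymm (le_iInf fun j => ?_) (iInf_le f _)
  rw [hconst i hfi k]
  rcases le_total j i with hj | hj
  · exact hf hj
  · obtain ⟨l, rfl⟩ := Nat.exists_eq_add_of_le hj
    exact (hconst i hfi l).ge

theorem LinearMap.iterate_add_self_apply {R M : Type*} [CommSemiring R] [AddCommMonoid M]
    [Module R M] (φ : M →ₗ[R] M) (m : ℕ) (A : M) :
    (fun X => X + φ X)^[m] A = ∑ k ∈ Finset.range (m + 1), m.choose k • φ^[k] A := by
  have h1 : (fun X => X + φ X) = ⇑(φ + 1) := by
    funext X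
    simp [add_comm]
  rw [h1, ← Module.End.pow_apply, (Commute.one_right φ).add_pow, LinearMap.sum_apply]
  refine Finset.sum_congr rfl fun k _ => ?_
  simp [Module.End.pow_apply, ← Nat.cast_smul_eq_nsmul R]

theorem summable_pow_div_factorial_smul_iterate {V : Type*} [NormedAddCommGroup V]
    [NormedSpace ℂ V] [FiniteDimensional ℂ V] (φ : V →ₗ[ℂ] V) (t : ℝ) (A : V) :
    Summable fun k : ℕ => (t ^ k / k.factorial : ℝ) • φ^[k] A := by
  set L := LinearMap.toContinuousLinearMap φ
  have hbound (k : ℕ) : ‖φ^[k] A‖ ≤ ‖L‖ ^ k * ‖A‖ := by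
    induction k with
    | zero => simp
    | succ k ih =>
      rw [Function.iterate_succ_apply', pow_succ', mul_assoc]
      exact (L.le_opNorm _).trans (mul_le_mul_of_nonneg_left ih (norm_nonneg _))
  refine .of_norm_bounded ((Real.summable_pow_div_factorial (|t| * ‖L‖)).mul_left ‖A‖)
    fun k => ?_
  calc ‖(t ^ k / k.factorial : ℝ) • φ^[k] A‖
      = |t| ^ k / k.factorial * ‖φ^[k] A‖ := by
        rw [norm_smul, Real.norm_eq_abs, abs_div, abs_pow, Nat.abs_cast]
    _ ≤ |t| ^ k / k.factorial * (‖L‖ ^ k * ‖A‖) := by gcongr; exact hbound k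
    _ = ‖A‖ * ((|t| * ‖L‖) ^ k / k.factorial) := by ring

section

variable {E : Type*} [NormedAddCommGroup E] [InnerProductSpace ℂ E]

theorem hasSum_expApply [FiniteDimensional ℂ E] (φ : (E →L[ℂ] E) →ₗ[ℂ] (E →L[ℂ] E)) (t : ℝ)
    (A : E →L[ℂ] E) :
    HasSum (fun k : ℕ => (t ^ k / k.factorial : ℝ) • φ^[k] A) (expApply φ t A) :=
  (summable_pow_div_factorial_smul_iterate φ t A).hasSum

theorem HasSum.inner_apply {ι : Type*} {A : ι → E →L[ℂ] E} {c : ι → ℝ} {S : E →L[ℂ] E}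
    (hS : HasSum (fun i => c i • A i) S) (x : E) :
    HasSum (fun i => (c i : ℂ) * ⟪x, A i x⟫) ⟪x, S x⟫ := by
  simpa using hS.mapL ((innerSL ℂ x).comp (apply ℂ E x))

namespace IsPosSemidef

variable {A B S T : E →L[ℂ] E}

theorem isPositive (hA : IsPosSemidef A) : A.IsPositive := by
  have hreal (x : E) : ⟪A x, x⟫ = ⟪x, A x⟫ := by
    rw [← inner_conj_symm, starRingEnd_apply, IsSelfAdjoint.of_nonneg (hA x)]
  refine (isPositive_iff A).mpr ⟨(LinearMap.isSymmetric_iff_inner_map_self_real _).mpr fun x => ?_,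
    fun x => (hreal x).symm ▸ hA x⟩
  change starRingEnd ℂ ⟪A x, x⟫ = ⟪A x, x⟫
  rw [inner_conj_symm, hreal]

theorem nonneg (hA : IsPosSemidef A) : 0 ≤ A :=
  (nonneg_iff_isPositive A).mpr hA.isPositive

theorem add (hA : IsPosSemidef A) (hB : IsPosSemidef B) : IsPosSemidef (A + B) := fun x => by
  simpa only [add_apply, inner_add_right] using add_nonneg (hA x) (hB x)

theorem of_hasSum {ι : Type*} {A : ι → E →L[ℂ] E} {c : ι → ℝ} {S : E →L[ℂ] E}
    (hA : ∀ i, IsPosSemidef (A i)) (hc : ∀ i, 0 ≤ c i) (hS : HasSum (fun i => c i • A i) S) :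
    IsPosSemidef S := fun x =>
  (hS.inner_apply x).nonneg fun i => mul_nonneg (Complex.zero_le_real.mpr (hc i)) (hA i x)

section

variable [CompleteSpace E]

theorem inner_apply_eq_norm_sqrt_apply_sq (hA : IsPosSemidef A) (x : E) :
    ⟪x, A x⟫ = (‖CFC.sqrt A x‖ ^ 2 : ℝ) := by
  conv_lhs => rw [← CFC.sqrt_mul_sqrt_self A hA.nonneg]
  rw [mul_apply_eq_comp,
    ← ((nonneg_iff_isPositive _).mp (CFC.sqrt_nonneg A)).inner_left_eq_inner_right]
  exact_mod_cast inner_self_eq_norm_sq_to_K _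

theorem apply_eq_zero_iff (hA : IsPosSemidef A) {x : E} : A x = 0 ↔ ⟪x, A x⟫ = 0 := by
  refine ⟨fun h => by rw [h, inner_zero_right], fun h => ?_⟩
  rw [hA.inner_apply_eq_norm_sqrt_apply_sq] at h
  have hx : CFC.sqrt A x = 0 := by simpa using h
  rw [← CFC.sqrt_mul_sqrt_self A hA.nonneg, mul_apply_eq_comp]
  simp [hx]

theorem ker_sqrt (hA : IsPosSemidef A) : (CFC.sqrt A).toLinearMap.ker = A.toLinearMap.ker := by
  ext x
  simp only [LinearMap.mem_ker, coe_coe, hA.apply_eq_zero_iff, hA.inner_apply_eq_norm_sqrt_apply_sq]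
  simp

theorem ker_add (hA : IsPosSemidef A) (hB : IsPosSemidef B) :
    (A + B).toLinearMap.ker = A.toLinearMap.ker ⊓ B.toLinearMap.ker := by
  ext x
  simp only [Submodule.mem_inf, LinearMap.mem_ker, coe_coe]
  rw [(hA.add hB).apply_eq_zero_iff, hA.apply_eq_zero_iff, hB.apply_eq_zero_iff, add_apply,
    inner_add_right]
  exact add_eq_zero_iff_of_nonneg (hA x) (hB x)

theorem isPosDef_iff_ker_eq_bot (hA : IsPosSemidef A) : IsPosDef A ↔ A.toLinearMap.ker = ⊥ := by
  simp only [IsPosDef, Submodule.eq_bot_iff, LinearMap.mem_ker, coe_coe, hA.apply_eq_zero_iff]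
  exact forall_congr' fun x => by rw [(hA x).lt_iff_ne', not_imp_not]

theorem ker_le_of_smul_sub (hS : IsPosSemidef S) {c : ℂ} (h : IsPosSemidef (c • T - S)) :
    T.toLinearMap.ker ≤ S.toLinearMap.ker := fun x hx => by
  have hTx : T x = 0 := hx
  have h' := h x
  rw [sub_apply, smul_apply, hTx, smul_zero, zero_sub, inner_neg_right, neg_nonneg] at h'
  exact hS.apply_eq_zero_iff.mpr (le_antisymm h' (hS x))

theorem apply_eq_zero_iff_of_hasSum {ι : Type*} {A : ι → E →L[ℂ] E} {c : ι → ℝ}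
    {S : E →L[ℂ] E} (hA : ∀ i, IsPosSemidef (A i))
    (hc : ∀ i, 0 ≤ c i) (hS : HasSum (fun i => c i • A i) S) {x : E} :
    S x = 0 ↔ ∀ i, c i = 0 ∨ A i x = 0 := by
  have hterm (i : ι) : (c i : ℂ) * ⟪x, A i x⟫ = 0 ↔ c i = 0 ∨ A i x = 0 := by
    rw [mul_eq_zero, Complex.ofReal_eq_zero, (hA i).apply_eq_zero_iff]
  have hnn (i : ι) : 0 ≤ (c i : ℂ) * ⟪x, A i x⟫ :=
    mul_nonneg (Complex.zero_le_real.mpr (hc i)) (hA i x)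
  have hsum := hS.inner_apply x
  rw [(of_hasSum hA hc hS).apply_eq_zero_iff, ← forall_congr' hterm]
  exact ⟨fun h i => congrFun ((hasSum_zero_iff_of_nonneg hnn).mp (h ▸ hsum)) i,
    fun h => hsum.unique (by simpa only [h] using hasSum_zero)⟩

end

theorem exists_smul_sub_of_ker_le [FiniteDimensional ℂ E] (hS : IsPosSemidef S)
    (hT : IsPosSemidef T) (h : T.toLinearMap.ker ≤ S.toLinearMap.ker) :
    ∃ c : ℝ, IsPosSemidef ((c : ℂ) • T - S) := by
  obtain ⟨C, hC⟩ := LinearMap.exists_norm_le_mul_norm_of_ker_le (CFC.sqrt T).toLinearMap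
    (CFC.sqrt S).toLinearMap (by simpa only [ker_sqrt hS, ker_sqrt hT] using h)
  refine ⟨C ^ 2, fun x => ?_⟩
  rw [sub_apply, smul_apply, inner_sub_right, inner_smul_right,
    hT.inner_apply_eq_norm_sqrt_apply_sq, hS.inner_apply_eq_norm_sqrt_apply_sq]
  norm_cast
  rw [sub_nonneg, ← mul_pow]
  exact pow_le_pow_left₀ (norm_nonneg _) (hC x) 2

end IsPosSemidef

def IsPositiveMap (φ : (E →L[ℂ] E) →ₗ[ℂ] (E →L[ℂ] E)) : Prop :=
  ∀ A, IsPosSemidef A → IsPosSemidef (φ A)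

namespace IsPositiveMap

variable {φ : (E →L[ℂ] E) →ₗ[ℂ] (E →L[ℂ] E)} {A S T : E →L[ℂ] E}

theorem iterate (hφ : IsPositiveMap φ) (hA : IsPosSemidef A) (k : ℕ) :
    IsPosSemidef (φ^[k] A) := by
  induction k with
  | zero => exact hA
  | succ k ih => simpa only [Function.iterate_succ_apply'] using hφ _ ih

theorem isPosSemidef_iterate_add_self (hφ : IsPositiveMap φ) (hA : IsPosSemidef A) (m : ℕ) :
    IsPosSemidef ((fun X => X + φ X)^[m] A) := by
  induction m with
  | zero => exact hA
  | succ m ih => simpa only [Function.iterate_succ_apply'] using ih.add (hφ _ ih)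

theorem iterate_add_self_apply_eq_zero_iff [CompleteSpace E] (hφ : IsPositiveMap φ)
    (hA : IsPosSemidef A) (m : ℕ) {x : E} :
    ((fun X => X + φ X)^[m] A) x = 0 ↔ ∀ k ≤ m, (φ^[k] A) x = 0 := by
  have hsum : HasSum (fun k => (m.choose k : ℝ) • φ^[k] A) ((fun X => X + φ X)^[m] A) := by
    rw [φ.iterate_add_self_apply]
    simp_rw [← Nat.cast_smul_eq_nsmul ℝ]
    exact hasSum_sum_of_ne_finset_zero fun k hk => by
      rw [Nat.choose_eq_zero_of_lt (by simpa using hk), Nat.cast_zero, zero_smul]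
  rw [IsPosSemidef.apply_eq_zero_iff_of_hasSum (hφ.iterate hA) (fun k => by positivity) hsum]
  refine forall_congr' fun k => ?_
  rw [Nat.cast_eq_zero, Nat.choose_eq_zero_iff, or_iff_not_imp_left, not_lt]

variable [FiniteDimensional ℂ E]

theorem isPosSemidef_expApply (hφ : IsPositiveMap φ) (hA : IsPosSemidef A) {t : ℝ} (ht : 0 ≤ t) :
    IsPosSemidef (expApply φ t A) :=
  .of_hasSum (hφ.iterate hA) (fun k => by positivity) (hasSum_expApply φ t A)

theorem ker_map_le_ker_map (hφ : IsPositiveMap φ) (hS : IsPosSemidef S) (hT : IsPosSemidef T)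
    (h : T.toLinearMap.ker ≤ S.toLinearMap.ker) :
    (φ T).toLinearMap.ker ≤ (φ S).toLinearMap.ker := by
  obtain ⟨c, hc⟩ := hS.exists_smul_sub_of_ker_le hT h
  exact (hφ S hS).ker_le_of_smul_sub (by simpa only [map_sub, map_smul] using hφ _ hc)

theorem ker_map_eq_ker_map (hφ : IsPositiveMap φ) (hS : IsPosSemidef S) (hT : IsPosSemidef T)
    (h : T.toLinearMap.ker = S.toLinearMap.ker) :
    (φ T).toLinearMap.ker = (φ S).toLinearMap.ker :=
  (hφ.ker_map_le_ker_map hS hT h.le).antisymm (hφ.ker_map_le_ker_map hT hS h.ge)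

theorem expApply_apply_eq_zero_iff (hφ : IsPositiveMap φ) (hA : IsPosSemidef A) {t : ℝ}
    (ht : 0 < t) {x : E} :
    expApply φ t A x = 0 ↔ ∀ k, (φ^[k] A) x = 0 := by
  rw [IsPosSemidef.apply_eq_zero_iff_of_hasSum (hφ.iterate hA) (fun k => by positivity)
    (hasSum_expApply φ t A)]
  exact forall_congr' fun k => or_iff_right (by positivity)

theorem ker_iterate_add_self_finrank_sub_one (hφ : IsPositiveMap φ) (hA : IsPosSemidef A)
    (hA0 : A ≠ 0) {t : ℝ} (ht : 0 < t) :
    ((fun X => X + φ X)^[Module.finrank ℂ E - 1] A).toLinearMap.ker =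
      (expApply φ t A).toLinearMap.ker := by
  set T := fun m => (fun X => X + φ X)^[m] A
  have hT := hφ.isPosSemidef_iterate_add_self hA
  have hstep (m : ℕ) : (T (m + 1)).toLinearMap.ker =
      (T m).toLinearMap.ker ⊓ (φ (T m)).toLinearMap.ker := by
    rw [← (hT m).ker_add (hφ _ (hT m))]
    simp only [T, Function.iterate_succ_apply']
  have hstab (m : ℕ) (h : (T (m + 1)).toLinearMap.ker = (T m).toLinearMap.ker) :
      (T (m + 2)).toLinearMap.ker = (T (m + 1)).toLinearMap.ker := by
    rw [hstep, hφ.ker_map_eq_ker_map (hT m) (hT (m + 1)) h, h, ← hstep, h]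
  have hfinrank : Module.finrank ℂ (T 0).toLinearMap.ker ≤ Module.finrank ℂ E - 1 := by
    have hker : (T 0).toLinearMap.ker ≠ ⊤ := by simpa [T, ← coe_inj] using hA0
    have := Submodule.finrank_lt hker
    omega
  rw [Submodule.eq_iInf_of_antitone_of_finrank_le (f := fun m => (T m).toLinearMap.ker)
    (antitone_nat_of_succ_le fun m => (hstep m).trans_le inf_le_left) hstab hfinrank]
  ext x
  simp only [Submodule.mem_iInf, LinearMap.mem_ker, coe_coe, T,
    hφ.iterate_add_self_apply_eq_zero_iff hA, hφ.expApply_apply_eq_zero_iff hA ht]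
  exact ⟨fun h k => h k k le_rfl, fun h m k _ => h k⟩

end IsPositiveMap

end

/-- For `φ` a positive linear map on `B(H)` with `dim H = n < ∞`,
`φ` is ergodic iff `(1 + φ)^(n-1) (A)` is positive definite for every
positive semidefinite `A ≠ 0`. -/
theorem ergodic_iff_one_add_pow [FiniteDimensional ℂ H]
    (φ : (H →L[ℂ] H) →ₗ[ℂ] (H →L[ℂ] H))
    (hpos : ∀ A, IsPosSemidef A → IsPosSemidef (φ A)) :
    (∀ A, IsPosSemidef A → A ≠ 0 →
        ∃ t : ℝ, 0 < t ∧ IsPosDef (expApply (fun X => φ X) t A)) ↔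
      (∀ A, IsPosSemidef A → A ≠ 0 →
        IsPosDef ((fun X => X + φ X)^[Module.finrank ℂ H - 1] A)) := by
  have hφ : IsPositiveMap φ := hpos
  refine ⟨fun herg A hA hA0 => ?_, fun h A hA hA0 => ⟨1, one_pos, ?_⟩⟩
  · obtain ⟨t, ht, hexp⟩ := herg A hA hA0
    rw [(hφ.isPosSemidef_iterate_add_self hA _).isPosDef_iff_ker_eq_bot,
      hφ.ker_iterate_add_self_finrank_sub_one hA hA0 ht]
    exact (hφ.isPosSemidef_expApply hA ht.le).isPosDef_iff_ker_eq_bot.mp hexp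
  · rw [(hφ.isPosSemidef_expApply hA zero_le_one).isPosDef_iff_ker_eq_bot,
      ← hφ.ker_iterate_add_self_finrank_sub_one hA hA0 one_pos]
    exact (hφ.isPosSemidef_iterate_add_self hA _).isPosDef_iff_ker_eq_bot.mp (h A hA hA0)

end
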